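/- Let R be a discrete valuation ring in which 2 is invertible, let t ∈ R be a uniformizer (a generator of the maximal ideal), and let a, b, c ∈ R be such that the discriminant Δ of the Weierstrass curve with coefficients (a₁, a₂, a₃, a₄, a₆) = (0, a, 0, b, c) (i.e. the curve y² = x³ + a·x² + b·x + c) is a unit in R. Then the ring R[u, v]/(v² − u³ − t²·a·u² − t⁴·b·u − t⁶·c) is an integral domain which is integrally closed in its field of fractions. -/

import Mathlib

/-!
Put `P = R[u]` and `f = u³ + t²a·u² + t⁴b·u + t⁶c`, so that the ring is `P[v]/(v² − f)`.
The discriminant of `f` is `t¹²Δ/16 ≠ 0`, so `f` is squarefree, and `f` has odd degree, so it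
is not a square. For such `f` in a factorial ring `P` with `2` invertible, `P[√f]` is the
integral closure of `P` in the quadratic field `K(√f)`, `K = Frac P`: if `α + β√f` is integral,
so is its conjugate, hence the trace `2α` and the norm `α² − β²f` lie in `P`. Thus `α ∈ P` and
`β²f ∈ P`, which forces `β ∈ P` because `f` is squarefree.
-/

open MvPolynomial in
/-- The Weierstrass relation `y² − x³ − a·x² − b·x − c` in the polynomial ring in two
variables `x = X 0`, `y = X 1`. -/
noncomputable def wRel (A : Type*) [CommRing A] (a b c : A) : MvPolynomial (Fin 2) A :=
  X 1 ^ 2 - X 0 ^ 3 - C a * X 0 ^ 2 - C b * X 0 - C c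

open Polynomial

namespace Polynomial

theorem Monic.squarefree_of_discr_ne_zero {R : Type*} [CommRing R] [IsDomain R] {f : R[X]}
    (hf : f.Monic) (hdeg : 0 < f.degree) (hdiscr : f.discr ≠ 0) : Squarefree f := by
  have hn : f.natDegree ≠ 0 := (natDegree_pos_iff_degree_pos.mpr hdeg).ne'
  obtain ⟨p, q, -, -, hpq⟩ := exists_mul_add_mul_eq_C_resultant f (derivative f) le_rfl
    (natDegree_derivative_le f) (Or.inl hn)
  rw [resultant_deriv hdeg, hf.leadingCoeff, mul_one] at hpq
  have hres : C ((-1) ^ (f.natDegree * (f.natDegree - 1) / 2) * f.discr) ≠ 0 := by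
    simpa using hdiscr
  intro g hg
  have hg_deriv : g ∣ derivative f := by
    simpa using pow_sub_one_dvd_derivative_of_pow_dvd (n := 2) (by rwa [sq])
  have hg_res : g ∣ C ((-1) ^ (f.natDegree * (f.natDegree - 1) / 2) * f.discr) :=
    hpq ▸ dvd_add (((dvd_mul_right g g).trans hg).mul_right p) (hg_deriv.mul_right q)
  obtain ⟨r, rfl⟩ : ∃ r, g = C r := ⟨g.coeff 0, eq_C_of_natDegree_eq_zero <|
    Nat.le_zero.mp ((natDegree_le_of_dvd hg_res hres).trans (natDegree_C _).le)⟩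
  rw [← C_mul, C_dvd_iff_dvd_coeff] at hg
  have hr := hg f.natDegree
  rw [hf.coeff_natDegree] at hr
  exact isUnit_C.mpr (isUnit_of_mul_isUnit_left (isUnit_of_dvd_one hr))

theorem not_isSquare_of_odd_natDegree {R : Type*} [CommRing R] [NoZeroDivisors R] {f : R[X]}
    (hf : Odd f.natDegree) : ¬ IsSquare f := by
  rintro ⟨g, rfl⟩
  rcases eq_or_ne g 0 with rfl | hg
  · simp at hf
  · rw [natDegree_mul hg hg] at hf
    exact Nat.not_odd_iff_even.mpr ⟨_, rfl⟩ hf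

end Polynomial

theorem WeierstrassCurve.sixteen_mul_discr_eq_Δ {R : Type*} [CommRing R] [Nontrivial R]
    (a b c : R) :
    16 * (X ^ 3 + C a * X ^ 2 + C b * X + C c).discr = (⟨0, a, 0, b, c⟩ : WeierstrassCurve R).Δ := by
  have hdeg : (X ^ 3 + C a * X ^ 2 + C b * X + C c).degree = 3 := by compute_degree!
  rw [discr_of_degree_eq_three hdeg]
  simp only [coeff_add, coeff_C_mul, coeff_X_pow, coeff_X, coeff_C]
  simp [Δ, b₂, b₄, b₆, b₈]
  ring

theorem Squarefree.exists_algebraMap_eq_of_sq_mul {P K : Type*} [CommRing P] [IsDomain P]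
    [IsIntegrallyClosed P] [DecompositionMonoid P] [Field K] [Algebra P K] [IsFractionRing P K]
    {f : P} (hf : Squarefree f) {β : K} {p : P}
    (h : β ^ 2 * algebraMap P K f = algebraMap P K p) : ∃ b, algebraMap P K b = β := by
  have hf0 : algebraMap P K f ≠ 0 :=
    (map_ne_zero_iff _ (IsFractionRing.injective P K)).mpr hf.ne_zero
  obtain ⟨e, he⟩ : ∃ e, algebraMap P K e = β * algebraMap P K f :=
    IsIntegrallyClosed.exists_algebraMap_eq_of_isIntegral_pow two_pos <| by
      rw [mul_pow, sq (algebraMap P K f), ← mul_assoc, h, ← map_mul]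
      exact isIntegral_algebraMap
  have he2 : e ^ 2 = p * f := IsFractionRing.injective P K <| by
    rw [map_pow, he, map_mul, ← h]; ring
  obtain ⟨b, rfl⟩ := (hf.dvd_pow_iff_dvd two_ne_zero).mp (Dvd.intro_left _ he2.symm)
  refine ⟨b, mul_right_cancel₀ hf0 ?_⟩
  rw [← he, map_mul, mul_comm]

namespace AdjoinRoot

section QuadraticRing

variable {K : Type*} [CommRing K] (d : K)

theorem root_X_sq_sub_C_sq : root (X ^ 2 - C d) ^ 2 = of _ d := by
  have h := eval₂_root (X ^ 2 - C d)
  rwa [eval₂_sub, eval₂_X_pow, eval₂_C, sub_eq_zero] at h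

theorem exists_eq_of_add_of_mul_root [Nontrivial K] (x : AdjoinRoot (X ^ 2 - C d)) :
    ∃ α β : K, x = of _ α + of _ β * root _ := by
  have hq : (X ^ 2 - C d).Monic := monic_X_pow_sub_C d two_ne_zero
  obtain ⟨g, rfl⟩ := mk_surjective x
  have hr : (g %ₘ (X ^ 2 - C d)).natDegree ≤ 1 := by
    have := natDegree_modByMonic_lt g hq (fun h ↦ by simpa using congrArg natDegree h)
    rw [natDegree_X_pow_sub_C] at this
    omega
  refine ⟨(g %ₘ (X ^ 2 - C d)).coeff 0, (g %ₘ (X ^ 2 - C d)).coeff 1, ?_⟩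
  conv_lhs => rw [← mk_leftInverse hq (mk _ g), modByMonicHom_mk,
    eq_X_add_C_of_natDegree_le_one hr]
  simp only [map_add, map_mul, mk_C, mk_X]
  ring

variable {S : Type*} [CommRing S] [Algebra S K]

noncomputable def sqrtConj : AdjoinRoot (X ^ 2 - C d) →ₐ[S] AdjoinRoot (X ^ 2 - C d) :=
  liftAlgHom _ (IsScalarTower.toAlgHom S K _) (-root _) <| by
    simp [root_X_sq_sub_C_sq, ← algebraMap_eq]

theorem sqrtConj_apply (α β : K) :
    sqrtConj (S := S) d (of _ α + of _ β * root _) = of _ α - of _ β * root _ := by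
  simp only [sqrtConj, map_add, map_mul, liftAlgHom_of, liftAlgHom_root]
  simp [algebraMap_eq]
  ring

end QuadraticRing

theorem isIntegral_root_X_sq_sub_C {P K : Type*} [CommRing P] [CommRing K] [Algebra P K]
    (f : P) : IsIntegral P (root (X ^ 2 - C (algebraMap P K f))) := by
  refine IsIntegral.of_pow two_pos ?_
  rw [root_X_sq_sub_C_sq, ← algebraMap_eq, ← IsScalarTower.algebraMap_apply]
  exact isIntegral_algebraMap

section IntegralClosure

variable {P K : Type*} [CommRing P] [IsDomain P] [IsIntegrallyClosed P] [Field K] [Algebra P K]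
  [IsFractionRing P K]

theorem exists_algebraMap_eq_of_isIntegral_of_add_of_mul_root [DecompositionMonoid P]
    (h2 : IsUnit (2 : P)) {f : P} (hf : Squarefree f) {α β : K}
    (hx : IsIntegral P (of (X ^ 2 - C (algebraMap P K f)) α + of _ β * root _)) :
    (∃ a, algebraMap P K a = α) ∧ ∃ b, algebraMap P K b = β := by
  set d := algebraMap P K f
  have hK : ∀ γ : K, IsIntegral P (of (X ^ 2 - C d) γ) → ∃ c, algebraMap P K c = γ := by
    intro γ hγ
    have hinj := coe_injective (f := X ^ 2 - C d) (by rw [degree_X_pow_sub_C two_pos]; decide)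
    rw [← algebraMap_eq, isIntegral_algebraMap_iff hinj] at hγ
    exact IsIntegrallyClosed.isIntegral_iff.mp hγ
  have hσx := hx.map (sqrtConj (S := P) d)
  rw [sqrtConj_apply] at hσx
  obtain ⟨s, hs⟩ : ∃ s, algebraMap P K s = 2 * α := hK _ <| by
    convert hx.add hσx using 1
    simp only [map_mul, map_ofNat]
    ring
  obtain ⟨n, hn⟩ : ∃ n, algebraMap P K n = α ^ 2 - β ^ 2 * d := hK _ <| by
    convert hx.mul hσx using 1
    simp only [map_sub, map_mul, map_pow, ← root_X_sq_sub_C_sq]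
    ring
  have hα : algebraMap P K (↑h2.unit⁻¹ * s) = α := by
    rw [map_mul, hs, ← mul_assoc, ← map_ofNat (algebraMap P K) 2, ← map_mul,
      h2.val_inv_mul, map_one, one_mul]
  refine ⟨⟨_, hα⟩, hf.exists_algebraMap_eq_of_sq_mul (p := (↑h2.unit⁻¹ * s) ^ 2 - n) ?_⟩
  rw [map_sub, map_pow, hα, hn]
  ring

theorem integralClosure_eq_adjoin_root [DecompositionMonoid P] (h2 : IsUnit (2 : P)) {f : P}
    (hf : Squarefree f) :
    integralClosure P (AdjoinRoot (X ^ 2 - C (algebraMap P K f))) =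
      Algebra.adjoin P {root _} := by
  refine le_antisymm (fun x hx ↦ ?_) ?_
  · obtain ⟨α, β, rfl⟩ := exists_eq_of_add_of_mul_root _ x
    obtain ⟨⟨a, rfl⟩, ⟨b, rfl⟩⟩ :=
      exists_algebraMap_eq_of_isIntegral_of_add_of_mul_root h2 hf hx
    simp only [← algebraMap_eq, ← IsScalarTower.algebraMap_apply]
    exact add_mem (Subalgebra.algebraMap_mem _ a)
      (mul_mem (Subalgebra.algebraMap_mem _ b) (Algebra.subset_adjoin rfl))
  · rw [Algebra.adjoin_le_iff, Set.singleton_subset_iff]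
    exact isIntegral_root_X_sq_sub_C f

theorem minpoly_root_X_sq_sub_C (f : P) [Fact (Irreducible (X ^ 2 - C (algebraMap P K f)))] :
    minpoly P (root (X ^ 2 - C (algebraMap P K f))) = X ^ 2 - C f := by
  refine map_injective (algebraMap P K) (IsFractionRing.injective P K) ?_
  rw [← minpoly.isIntegrallyClosed_eq_field_fractions' K (isIntegral_root_X_sq_sub_C (K := K) f),
    minpoly_root (monic_X_pow_sub_C _ two_ne_zero).ne_zero,
    (monic_X_pow_sub_C _ two_ne_zero).leadingCoeff]
  simp

end IntegralClosure

end AdjoinRoot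

open AdjoinRoot in
theorem isDomain_and_isIntegrallyClosed_adjoinRoot_X_sq_sub_C {P : Type*} [CommRing P]
    [IsDomain P] [UniqueFactorizationMonoid P] (h2 : IsUnit (2 : P)) {f : P} (hf : Squarefree f)
    (hsq : ¬ IsSquare f) :
    IsDomain (AdjoinRoot (X ^ 2 - C f)) ∧ IsIntegrallyClosed (AdjoinRoot (X ^ 2 - C f)) := by
  let K := FractionRing P
  have : Fact (Irreducible (X ^ 2 - C (algebraMap P K f))) := by
    refine ⟨X_pow_sub_C_irreducible_of_prime Nat.prime_two fun r hr ↦ hsq ?_⟩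
    obtain ⟨s, rfl⟩ := IsIntegrallyClosed.exists_algebraMap_eq_of_isIntegral_pow two_pos
      (hr ▸ isIntegral_algebraMap : IsIntegral P (r ^ 2))
    exact ⟨s, IsFractionRing.injective P K (by rw [← hr, map_mul, sq])⟩
  have : FiniteDimensional K (AdjoinRoot (X ^ 2 - C (algebraMap P K f))) :=
    (powerBasis (monic_X_pow_sub_C _ two_ne_zero).ne_zero).finite
  have := integralClosure.isIntegrallyClosedOfFiniteExtension K
    (R := P) (L := AdjoinRoot (X ^ 2 - C (algebraMap P K f)))
  have : Module.IsTorsionFree P (AdjoinRoot (X ^ 2 - C (algebraMap P K f))) :=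
    .trans_faithfulSMul P K _
  let e := (minpoly.equivAdjoin (isIntegral_root_X_sq_sub_C (K := K) f)).toRingEquiv.trans
    (Subalgebra.equivOfEq _ _ (integralClosure_eq_adjoin_root h2 hf).symm).toRingEquiv
  rw [← minpoly_root_X_sq_sub_C (K := K) f]
  exact ⟨e.toMulEquiv.isDomain _, IsIntegrallyClosed.of_equiv e.symm⟩

namespace MvPolynomial

variable {R : Type*} [CommRing R]

noncomputable def finTwoEquivPolynomialPolynomial : MvPolynomial (Fin 2) R ≃+* R[X][X] :=
  RingEquiv.ofRingHom
    (eval₂Hom (Polynomial.C.comp Polynomial.C) ![Polynomial.C Polynomial.X, Polynomial.X])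
    (eval₂RingHom (eval₂RingHom MvPolynomial.C (X 0)) (X 1))
    (by
      refine Polynomial.ringHom_ext' (Polynomial.ringHom_ext' ?_ ?_) ?_
      · ext r; simp
      · simp
      · simp)
    (by
      refine MvPolynomial.ringHom_ext (fun r ↦ ?_) (fun i ↦ ?_)
      · simp
      · fin_cases i <;> simp)

theorem finTwoEquivPolynomialPolynomial_wRel (a b c : R) :
    finTwoEquivPolynomialPolynomial (wRel R a b c) =
      Polynomial.X ^ 2 - Polynomial.C (Polynomial.X ^ 3 + Polynomial.C a * Polynomial.X ^ 2 +
        Polynomial.C b * Polynomial.X + Polynomial.C c) := by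
  simp [wRel, finTwoEquivPolynomialPolynomial]
  ring

noncomputable def wRelQuotientEquivAdjoinRoot (a b c : R) :
    MvPolynomial (Fin 2) R ⧸ Ideal.span {wRel R a b c} ≃+*
      AdjoinRoot (Polynomial.X ^ 2 - Polynomial.C (Polynomial.X ^ 3 +
        Polynomial.C a * Polynomial.X ^ 2 + Polynomial.C b * Polynomial.X + Polynomial.C c)) :=
  Ideal.quotientEquiv _ _ finTwoEquivPolynomialPolynomial <| by
    rw [Ideal.map_span, Set.image_singleton, RingEquiv.coe_toRingHom,
      finTwoEquivPolynomialPolynomial_wRel]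

end MvPolynomial

/-- Let `R` be a discrete valuation ring in which `2` is invertible, `t ∈ R` a uniformizer,
and `a, b, c ∈ R` such that the discriminant of the Weierstrass curve `y² = x³ + ax² + bx + c`
is a unit in `R`. Then `R[u,v]/(v² − u³ − t²au² − t⁴bu − t⁶c)` is an integral domain which is
integrally closed in its field of fractions. -/
theorem stmt8 (R : Type*) [CommRing R] [IsDomain R] [IsDiscreteValuationRing R]
    (h2 : IsUnit (2 : R)) (t : R) (ht : Ideal.span {t} = IsLocalRing.maximalIdeal R)
    (a b c : R) (hΔ : IsUnit (WeierstrassCurve.mk 0 a 0 b c : WeierstrassCurve R).Δ) :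
    IsDomain (MvPolynomial (Fin 2) R ⧸
      Ideal.span {wRel R (t ^ 2 * a) (t ^ 4 * b) (t ^ 6 * c)}) ∧
    IsIntegrallyClosed (MvPolynomial (Fin 2) R ⧸
      Ideal.span {wRel R (t ^ 2 * a) (t ^ 4 * b) (t ^ 6 * c)}) := by
  have ht0 : t ≠ 0 := by
    rintro rfl
    exact IsDiscreteValuationRing.not_a_field R (ht ▸ Ideal.span_singleton_eq_bot.mpr rfl)
  set f : R[X] := X ^ 3 + C (t ^ 2 * a) * X ^ 2 + C (t ^ 4 * b) * X + C (t ^ 6 * c)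
  have hf_deg : f.natDegree = 3 := by unfold f; compute_degree!
  have hf_monic : f.Monic := by unfold f; monicity!
  have hdiscr : 16 * f.discr = t ^ 12 * (WeierstrassCurve.mk 0 a 0 b c).Δ := by
    rw [WeierstrassCurve.sixteen_mul_discr_eq_Δ]
    simp only [WeierstrassCurve.Δ, WeierstrassCurve.b₂, WeierstrassCurve.b₄,
      WeierstrassCurve.b₆, WeierstrassCurve.b₈]
    ring
  have hf_sqfree : Squarefree f := hf_monic.squarefree_of_discr_ne_zero
    (by rw [degree_eq_natDegree hf_monic.ne_zero, hf_deg]; decide) fun h ↦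
      mul_ne_zero (pow_ne_zero 12 ht0) hΔ.ne_zero (by rw [← hdiscr, h, mul_zero])
  obtain ⟨hdom, hic⟩ := isDomain_and_isIntegrallyClosed_adjoinRoot_X_sq_sub_C
    (by rw [← map_ofNat C 2]; exact h2.map C) hf_sqfree
    (not_isSquare_of_odd_natDegree (by rw [hf_deg]; decide))
  let e := MvPolynomial.wRelQuotientEquivAdjoinRoot (t ^ 2 * a) (t ^ 4 * b) (t ^ 6 * c)
  exact ⟨e.toMulEquiv.isDomain _, IsIntegrallyClosed.of_equiv e.symm⟩
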